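/- arXiv:2505.24464 — 6 statements merged into one kernel-verified Lean document; each statement's English description precedes it below -/
import Mathlib

section
/- Let φ(a) = ∫ Ψ(a+w) p(w) dw. Suppose Ψ is odd (Ψ(−u) = −Ψ(u)), monotonically nondecreasing, and Ψ(u) > 0 for every u > 0; suppose the density p is symmetric (p(u) = p(−u)) and p(u) > 0 for all |u| ≤ c, for some constant c > 0. Then φ(a) > 0 for every a > 0. -/
open MeasureTheory

/-! Pairing `w` with `-w` and using the symmetry of `p`,
`2 φ(a) = ∫ (Ψ(a+w) + Ψ(a-w)) p(w) dw`. Since `Ψ` is odd and nondecreasing,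
`Ψ(a-w) = -Ψ(w-a) ≥ -Ψ(a+w)`, so the new integrand is nonnegative; for `|w| < min c a`
both `Ψ(a ± w)` and `p(w)` are positive, so it is positive on an interval of positive length. -/

theorem Function.Odd.apply_add_add_apply_sub_nonneg {α β : Type*}
    [AddCommGroup α] [PartialOrder α] [IsOrderedAddMonoid α]
    [AddCommGroup β] [PartialOrder β] [IsOrderedAddMonoid β]
    {Ψ : α → β} (hodd : Function.Odd Ψ) (hmono : Monotone Ψ) {a : α} (ha : 0 ≤ a) (w : α) :
    0 ≤ Ψ (a + w) + Ψ (a - w) := by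
  have hle : Ψ (w - a) ≤ Ψ (a + w) :=
    hmono (by rw [sub_eq_add_neg, add_comm a]; gcongr; exact neg_le_self ha)
  rw [← neg_sub w a, hodd]
  simpa [← sub_eq_add_neg, sub_nonneg] using hle

namespace MeasureTheory

theorem integral_add_comp_neg {f : ℝ → ℝ} (hf : Integrable f) :
    ∫ w, (f w + f (-w)) = 2 * ∫ w, f w := by
  rw [integral_add hf hf.comp_neg, integral_neg_eq_self]
  ring

theorem integral_pos_of_pos_on_isOpen {X : Type*} [TopologicalSpace X] [MeasurableSpace X]
    {μ : Measure X} [μ.IsOpenPosMeasure] {g : X → ℝ} (hg : Integrable g μ) (hg_nonneg : 0 ≤ g)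
    {U : Set X} (hU : IsOpen U) (hU_ne : U.Nonempty) (hg_pos : ∀ x ∈ U, 0 < g x) :
    0 < ∫ x, g x ∂μ := by
  rw [integral_pos_iff_support_of_nonneg hg_nonneg hg]
  exact (hU.measure_pos μ hU_ne).trans_le (measure_mono fun x hx => (hg_pos x hx).ne')

theorem Integrable.bdd_mul_of_monotone {Ψ p : ℝ → ℝ} (hp : Integrable p) (hmono : Monotone Ψ)
    {C : ℝ} (hbdd : ∀ u, |Ψ u| ≤ C) (a : ℝ) : Integrable (fun w => Ψ (a + w) * p w) :=
  hp.bdd_mul ((hmono.measurable.comp (measurable_const_add a)).aestronglyMeasurable)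
    (.of_forall fun w => hbdd (a + w))

end MeasureTheory

theorem phi_pos_general (p Ψ : ℝ → ℝ)
    (hp_nonneg : ∀ u, 0 ≤ p u)
    (hp_int : ∫ u, p u = 1)
    (c₁ : ℝ) (hΨ_bdd : ∀ u, |Ψ u| ≤ c₁)
    (hΨ_odd : ∀ u, Ψ (-u) = -Ψ u)
    (hΨ_mono : ∀ u v : ℝ, u ≤ v → Ψ u ≤ Ψ v)
    (hΨ_pos : ∀ u : ℝ, 0 < u → 0 < Ψ u)
    (hp_symm : ∀ u, p u = p (-u))
    (c : ℝ) (hc : 0 < c) (hp_pos : ∀ u : ℝ, |u| ≤ c → 0 < p u)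
    (φ : ℝ → ℝ) (hφ : ∀ a, φ a = ∫ w, Ψ (a + w) * p w) :
    ∀ a : ℝ, 0 < a → 0 < φ a := by
  intro a ha
  set f : ℝ → ℝ := fun w => Ψ (a + w) * p w
  have hf : Integrable f :=
    (integrable_of_integral_eq_one hp_int).bdd_mul_of_monotone hΨ_mono hΨ_bdd a
  have hsymm : ∀ w, f w + f (-w) = (Ψ (a + w) + Ψ (a - w)) * p w := fun w => by
    simp only [f, ← hp_symm w, ← sub_eq_add_neg]
    ring
  have hpos : 0 < ∫ w, (f w + f (-w)) := by
    refine integral_pos_of_pos_on_isOpen (hf.add hf.comp_neg) (fun w => ?_)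
      (isOpen_Ioo (a := -min c a) (b := min c a)) ⟨0, by simp [hc, ha]⟩ fun w hw => ?_
    · rw [Pi.zero_apply, hsymm]
      exact mul_nonneg (Function.Odd.apply_add_add_apply_sub_nonneg hΨ_odd hΨ_mono ha.le w)
        (hp_nonneg w)
    · obtain ⟨hwc, hwa⟩ := lt_min_iff.1 (abs_lt.2 hw)
      rw [hsymm]
      have hpw := hp_pos w hwc.le
      have hplus := hΨ_pos (a + w) (by linarith [neg_abs_le w])
      have hminus := hΨ_pos (a - w) (by linarith [le_abs_self w])
      positivity
  rw [integral_add_comp_neg hf] at hpos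
  rw [hφ a]
  linarith

/-- If `Ψ` is odd, nondecreasing and strictly positive on positives, and the
symmetric density `p` is strictly positive on `[-c, c]` for some `c > 0`, then
`φ(a) = ∫ Ψ(a+w) p(w) dw` satisfies `φ(a) > 0` for every `a > 0`. -/
theorem phi_pos (p Ψ : ℝ → ℝ)
    (hp_meas : Measurable p) (hp_nonneg : ∀ u, 0 ≤ p u)
    (hp_int : ∫ u, p u = 1)
    (hΨ_meas : Measurable Ψ) (c₁ : ℝ) (hΨ_bdd : ∀ u, |Ψ u| ≤ c₁)
    (hΨ_odd : ∀ u, Ψ (-u) = -Ψ u)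
    (hΨ_mono : ∀ u v : ℝ, u ≤ v → Ψ u ≤ Ψ v)
    (hΨ_pos : ∀ u : ℝ, 0 < u → 0 < Ψ u)
    (hp_symm : ∀ u, p u = p (-u))
    (c : ℝ) (hc : 0 < c) (hp_pos : ∀ u : ℝ, |u| ≤ c → 0 < p u)
    (φ : ℝ → ℝ) (hφ : ∀ a, φ a = ∫ w, Ψ (a + w) * p w) :
    ∀ a : ℝ, 0 < a → 0 < φ a :=
  phi_pos_general p Ψ hp_nonneg hp_int c₁ hΨ_bdd hΨ_odd hΨ_mono hΨ_pos hp_symm c hc hp_pos φ hφ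
end

section
/- Let φ(a) = ∫ Ψ(a+w) p(w) dw. Suppose Ψ is odd (Ψ(−u) = −Ψ(u)), Ψ(u) > 0 for u > 0, Ψ is monotonically nondecreasing, |Ψ(u)| ≤ c₁ for all u, and Ψ is differentiable everywhere with |Ψ'(u)| ≤ c₂, for some constants c₁, c₂ > 0; suppose the density p is symmetric (p(u) = p(−u)) and p(u) > 0 for all |u| ≤ c, for some constant c > 0. Then φ is differentiable at 0 and its derivative at zero is strictly positive: φ'(0) > 0. -/
/-!
Differentiating under the integral sign (dominated by `c₂ p`) gives
`φ'(0) = ∫ Ψ'(w) p(w) dw`, whose integrand is nonnegative since `Ψ` is monotone. The integral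
vanishes only if `Ψ' p = 0` a.e., hence `Ψ' = 0` a.e. on `(-c, c]` where `p > 0`; by the
fundamental theorem of calculus this would force `Ψ c = Ψ (-c) = -Ψ c`, contradicting `Ψ c > 0`.
-/

open MeasureTheory Filter Function Set

section ConvolutionDeriv

variable {f p : ℝ → ℝ} {μ : Measure ℝ}

theorem integrable_comp_add_mul_of_bounded {C : ℝ} (hf : Measurable f) (hf_bdd : ∀ u, |f u| ≤ C)
    (hp : Integrable p μ) (a : ℝ) : Integrable (fun w ↦ f (a + w) * p w) μ :=
  hp.bdd_mul (hf.comp (measurable_const_add a)).aestronglyMeasurable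
    (ae_of_all _ fun w ↦ hf_bdd (a + w))

theorem hasDerivAt_integral_comp_add_mul {C C' : ℝ} (hf : Differentiable ℝ f)
    (hf_bdd : ∀ u, |f u| ≤ C) (hf'_bdd : ∀ u, |deriv f u| ≤ C') (hp : Integrable p μ) (a : ℝ) :
    HasDerivAt (fun x ↦ ∫ w, f (x + w) * p w ∂μ) (∫ w, deriv f (a + w) * p w ∂μ) a := by
  refine (hasDerivAt_integral_of_dominated_loc_of_deriv_le (F := fun x w ↦ f (x + w) * p w)
    (F' := fun x w ↦ deriv f (x + w) * p w) (bound := fun w ↦ C' * ‖p w‖) univ_mem (Eventually.of_forall fun x ↦ ?_) (integrable_comp_add_mul_of_bounded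
      hf.continuous.measurable hf_bdd hp a) ?_ ?_ (hp.norm.const_mul C') ?_).2
  · exact (integrable_comp_add_mul_of_bounded hf.continuous.measurable hf_bdd hp x).1
  · exact (integrable_comp_add_mul_of_bounded (measurable_deriv f) hf'_bdd hp a).1
  · refine ae_of_all _ fun w x _ ↦ ?_
    rw [norm_mul]
    exact mul_le_mul_of_nonneg_right (hf'_bdd _) (norm_nonneg _)
  · refine ae_of_all _ fun w x _ ↦ ?_
    have hshift : HasDerivAt (fun y ↦ f (y + w)) (deriv f (x + w)) x := by
      simpa using (hf (x + w)).hasDerivAt.comp_add_const x w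
    exact hshift.mul_const (p w)

end ConvolutionDeriv

section DerivPositivity

variable {f p : ℝ → ℝ} {a b : ℝ}

theorem Monotone.volume_support_deriv_inter_Ioc_pos (hf : Monotone f) (hdiff : Differentiable ℝ f)
    (hab : f a < f b) : 0 < volume (support (deriv f) ∩ Ioc a b) := by
  have hint : IntervalIntegrable (deriv f) volume a b :=
    intervalIntegral.intervalIntegrable_deriv_of_nonneg hdiff.continuous.continuousOn
      (fun x _ ↦ (hdiff x).hasDerivAt) (fun _ _ ↦ hf.deriv_nonneg)
  have hpos : 0 < ∫ x in a..b, deriv f x := by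
    rw [intervalIntegral.integral_deriv_eq_sub (fun x _ ↦ hdiff x) hint]
    linarith
  exact ((intervalIntegral.integral_pos_iff_support_of_nonneg_ae
    (ae_of_all _ fun _ ↦ hf.deriv_nonneg) hint).1 hpos).2

theorem Monotone.integral_deriv_mul_pos (hf : Monotone f) (hdiff : Differentiable ℝ f)
    (hab : f a < f b) (hp_nonneg : 0 ≤ p) (hp_pos : ∀ x ∈ Ioc a b, 0 < p x)
    (hint : Integrable (fun x ↦ deriv f x * p x)) : 0 < ∫ x, deriv f x * p x := by
  rw [integral_pos_iff_support_of_nonneg (fun x ↦ mul_nonneg hf.deriv_nonneg (hp_nonneg x)) hint]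
  refine (hf.volume_support_deriv_inter_Ioc_pos hdiff hab).trans_le (measure_mono ?_)
  rintro x ⟨hx, hxI⟩
  exact mul_ne_zero hx (hp_pos x hxI).ne'

end DerivPositivity

theorem phi_deriv_zero_pos_general (p Ψ : ℝ → ℝ)
    (hp_nonneg : ∀ u, 0 ≤ p u)
    (hp_int : ∫ u, p u = 1)
    (hΨ_odd : ∀ u, Ψ (-u) = -Ψ u)
    (hΨ_pos : ∀ u : ℝ, 0 < u → 0 < Ψ u)
    (hΨ_mono : ∀ u v : ℝ, u ≤ v → Ψ u ≤ Ψ v)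
    (c₁ : ℝ) (hΨ_bdd : ∀ u, |Ψ u| ≤ c₁)
    (hΨ_diff : ∀ u : ℝ, DifferentiableAt ℝ Ψ u)
    (c₂ : ℝ) (hΨ'_bdd : ∀ u, |deriv Ψ u| ≤ c₂)
    (c : ℝ) (hc : 0 < c) (hp_pos : ∀ u : ℝ, |u| ≤ c → 0 < p u)
    (φ : ℝ → ℝ) (hφ : ∀ a, φ a = ∫ w, Ψ (a + w) * p w) :
    DifferentiableAt ℝ φ 0 ∧ 0 < deriv φ 0 := by
  have hp : Integrable p := .of_integral_ne_zero (by rw [hp_int]; exact one_ne_zero)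
  have hφ' : HasDerivAt φ (∫ w, deriv Ψ w * p w) 0 := by
    simpa [← funext hφ] using hasDerivAt_integral_comp_add_mul hΨ_diff hΨ_bdd hΨ'_bdd hp 0
  have hΨ_lt : Ψ (-c) < Ψ c := by
    linarith [hΨ_odd c, hΨ_pos c hc]
  refine ⟨hφ'.differentiableAt, hφ'.deriv ▸ Monotone.integral_deriv_mul_pos hΨ_mono hΨ_diff hΨ_lt
    hp_nonneg (fun x hx ↦ hp_pos x (abs_le.2 ⟨hx.1.le, hx.2⟩)) ?_⟩
  exact (integrable_comp_add_mul_of_bounded (measurable_deriv Ψ) hΨ'_bdd hp 0).congr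
    (ae_of_all _ fun w ↦ by simp)

/-- Under the full set of assumptions on the nonlinearity `Ψ` and the
symmetric density `p` which is positive around the origin, the function
`φ(a) = ∫ Ψ(a+w) p(w) dw` is differentiable at `0` with strictly positive
derivative `φ'(0) > 0`. -/
theorem phi_deriv_zero_pos (p Ψ : ℝ → ℝ)
    (hp_meas : Measurable p) (hp_nonneg : ∀ u, 0 ≤ p u)
    (hp_int : ∫ u, p u = 1)
    (hΨ_meas : Measurable Ψ)
    (hΨ_odd : ∀ u, Ψ (-u) = -Ψ u)
    (hΨ_pos : ∀ u : ℝ, 0 < u → 0 < Ψ u)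
    (hΨ_mono : ∀ u v : ℝ, u ≤ v → Ψ u ≤ Ψ v)
    (c₁ : ℝ) (hc₁ : 0 < c₁) (hΨ_bdd : ∀ u, |Ψ u| ≤ c₁)
    (hΨ_diff : ∀ u : ℝ, DifferentiableAt ℝ Ψ u)
    (c₂ : ℝ) (hc₂ : 0 < c₂) (hΨ'_bdd : ∀ u, |deriv Ψ u| ≤ c₂)
    (hp_symm : ∀ u, p u = p (-u))
    (c : ℝ) (hc : 0 < c) (hp_pos : ∀ u : ℝ, |u| ≤ c → 0 < p u)
    (φ : ℝ → ℝ) (hφ : ∀ a, φ a = ∫ w, Ψ (a + w) * p w) :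
    DifferentiableAt ℝ φ 0 ∧ 0 < deriv φ 0 :=
  phi_deriv_zero_pos_general p Ψ hp_nonneg hp_int hΨ_odd hΨ_pos hΨ_mono c₁ hΨ_bdd hΨ_diff c₂ hΨ'_bdd
    c hc hp_pos φ hφ
end

section
/- Let (v_t) be a real sequence satisfying v_{t+1} = (1 − p/(t+1)^δ) v_t + q/(t+1)^δ for all t ≥ t₀, where p, q > 0, 0 < δ ≤ 1, t₀ is a natural number with v_{t₀} ≥ 0, and p/(t+1)^δ ≤ 1 for all t ≥ t₀. Then v_t converges and lim_{t→∞} v_t = q/p. -/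
open Filter Finset

/-!
The error `e t = v t - q / p` obeys `e (t + 1) = (1 - a t) * e t` with `a t = p / (t + 1) ^ δ ∈ [0, 1]`,
so `1 - x ≤ exp (-x)` gives `|e t| ≤ |e t₀| * exp (-∑_{t₀ ≤ s < t} a s)`. For `δ ≤ 1` the series
`∑ p / (s + 1) ^ δ` diverges, hence the error tends to zero.
-/

theorem abs_le_mul_exp_neg_sum_of_eq_one_sub_mul {a e : ℕ → ℝ} {t₀ : ℕ}
    (ha : ∀ t, t₀ ≤ t → a t ≤ 1) (he : ∀ t, t₀ ≤ t → e (t + 1) = (1 - a t) * e t) :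
    ∀ t, t₀ ≤ t → |e t| ≤ |e t₀| * Real.exp (-∑ s ∈ Ico t₀ t, a s) := by
  intro t ht
  induction t, ht using Nat.le_induction with
  | base => simp
  | succ t ht ih =>
    calc |e (t + 1)| = (1 - a t) * |e t| := by
          rw [he t ht, abs_mul, abs_of_nonneg (sub_nonneg.2 (ha t ht))]
      _ ≤ Real.exp (-a t) * (|e t₀| * Real.exp (-∑ s ∈ Ico t₀ t, a s)) :=
          mul_le_mul (Real.one_sub_le_exp_neg _) ih (abs_nonneg _) (Real.exp_nonneg _)
      _ = |e t₀| * Real.exp (-∑ s ∈ Ico t₀ (t + 1), a s) := by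
          rw [sum_Ico_succ_top ht, neg_add, Real.exp_add]
          ring

theorem tendsto_zero_of_eq_one_sub_mul {a e : ℕ → ℝ} {t₀ : ℕ}
    (ha : ∀ t, t₀ ≤ t → a t ≤ 1) (he : ∀ t, t₀ ≤ t → e (t + 1) = (1 - a t) * e t)
    (hsum : Tendsto (fun t => ∑ s ∈ Ico t₀ t, a s) atTop atTop) :
    Tendsto e atTop (nhds 0) := by
  have hbound : Tendsto (fun t => |e t₀| * Real.exp (-∑ s ∈ Ico t₀ t, a s)) atTop (nhds 0) := by
    simpa using (Real.tendsto_exp_neg_atTop_nhds_zero.comp hsum).const_mul |e t₀|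
  refine squeeze_zero_norm' ?_ hbound
  filter_upwards [eventually_ge_atTop t₀] with t ht
  exact abs_le_mul_exp_neg_sum_of_eq_one_sub_mul ha he t ht

theorem tendsto_sum_Ico_atTop_of_not_summable {f : ℕ → ℝ} (hf : ∀ n, 0 ≤ f n)
    (hs : ¬Summable f) (t₀ : ℕ) :
    Tendsto (fun t => ∑ s ∈ Ico t₀ t, f s) atTop atTop := by
  have hrange := (not_summable_iff_tendsto_nat_atTop_of_nonneg hf).1 hs
  refine (tendsto_atTop_add_const_right _ (-∑ s ∈ range t₀, f s) hrange).congr' ?_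
  filter_upwards [eventually_ge_atTop t₀] with t ht
  rw [sum_Ico_eq_sub _ ht, sub_eq_add_neg]

theorem not_summable_div_nat_succ_rpow {p δ : ℝ} (hp : p ≠ 0) (hδ : δ ≤ 1) :
    ¬Summable fun n : ℕ => p / ((n : ℝ) + 1) ^ δ := by
  simp_rw [div_eq_mul_one_div p, summable_mul_left_iff hp]
  intro h
  have : Summable fun n : ℕ => 1 / (n : ℝ) ^ δ :=
    (summable_nat_add_iff 1).1 (by exact_mod_cast h)
  exact hδ.not_gt (Real.summable_one_div_nat_rpow.1 this)

theorem seq_tendsto_q_div_p_general (v : ℕ → ℝ) (p q δ : ℝ) (t₀ : ℕ)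
    (hp : 0 < p) (hδ1 : δ ≤ 1)
    (hsmall : ∀ t : ℕ, t₀ ≤ t → p / ((t : ℝ) + 1) ^ δ ≤ 1)
    (hrec : ∀ t : ℕ, t₀ ≤ t →
      v (t + 1) = (1 - p / ((t : ℝ) + 1) ^ δ) * v t + q / ((t : ℝ) + 1) ^ δ) :
    Tendsto v atTop (nhds (q / p)) := by
  have hstep : ∀ t, t₀ ≤ t →
      v (t + 1) - q / p = (1 - p / ((t : ℝ) + 1) ^ δ) * (v t - q / p) := by
    intro t ht
    have : ((t : ℝ) + 1) ^ δ ≠ 0 := (Real.rpow_pos_of_pos (by positivity) δ).ne'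
    rw [hrec t ht]
    field_simp
    ring
  have hnonneg : ∀ n : ℕ, 0 ≤ p / ((n : ℝ) + 1) ^ δ := fun n => by positivity
  have hsum := tendsto_sum_Ico_atTop_of_not_summable hnonneg
    (not_summable_div_nat_succ_rpow hp.ne' hδ1) t₀
  exact tendsto_sub_nhds_zero_iff.1 (tendsto_zero_of_eq_one_sub_mul hsmall hstep hsum)

/-- If `v_{t+1} = (1 − p/(t+1)^δ) v_t + q/(t+1)^δ` for all `t ≥ t₀`, where
`p, q > 0`, `0 < δ ≤ 1`, `v_{t₀} ≥ 0` and `p/(t+1)^δ ≤ 1` for all `t ≥ t₀`,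
then `v_t → q/p`. -/
theorem seq_tendsto_q_div_p (v : ℕ → ℝ) (p q δ : ℝ) (t₀ : ℕ)
    (hp : 0 < p) (hq : 0 < q) (hδ0 : 0 < δ) (hδ1 : δ ≤ 1)
    (hv0 : 0 ≤ v t₀)
    (hsmall : ∀ t : ℕ, t₀ ≤ t → p / ((t : ℝ) + 1) ^ δ ≤ 1)
    (hrec : ∀ t : ℕ, t₀ ≤ t →
      v (t + 1) = (1 - p / ((t : ℝ) + 1) ^ δ) * v t + q / ((t : ℝ) + 1) ^ δ) :
    Tendsto v atTop (nhds (q / p)) :=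
  seq_tendsto_q_div_p_general v p q δ t₀ hp hδ1 hsmall hrec
end

section
/- Let (u_t), (v_t), (r_t) be real sequences, let t₀ ≥ 1 be a natural number, and let p, q > 0 be constants with p/(t+1) ≤ 1 for all t ≥ t₀. Suppose that for all t ≥ t₀: u_{t+1} ≤ (1 − p/(t+1)) u_t + q/(t+1), v_{t+1} = (1 − p/(t+1)) v_t + q/(t+1), and r_t = v_t − q/p. If u_{t₀} ≤ v_{t₀}, then for all t ≥ t₀ one has u_t ≤ v_t = r_t + q/p, and there exists a constant C > 0 such that |r_t| ≤ C t^{−p} for all t ≥ t₀ with t ≥ 1 (i.e., r_t = O(1/t^p)). -/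
/-!
Subtracting the fixed point `q/p` turns the recursion for `v` into the homogeneous one
`r_{t+1} = (1 - p/(t+1)) r_t`. Since `1 - x ≤ exp (-x)` and `(1 + 1/a)^p ≤ exp (p/a)`, one such
step does not increase the weighted quantity `|r_t| (t+1)^p`, which is therefore bounded by its
value at `t₀`. The comparison `u_t ≤ v_t` is an induction using that the coefficient
`1 - p/(t+1)` is nonnegative.
-/

theorem one_sub_div_mul_add_one_rpow_le {a p : ℝ} (ha : 0 < a) (hp : 0 ≤ p) :
    (1 - p / a) * (a + 1) ^ p ≤ a ^ p := by
  have hsplit : (a + 1) ^ p = a ^ p * (1 + 1 / a) ^ p := by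
    rw [← Real.mul_rpow ha.le (by positivity)]
    congr 1
    field_simp
  have hgrowth : (1 + 1 / a) ^ p ≤ Real.exp (p / a) :=
    calc (1 + 1 / a) ^ p ≤ Real.exp (1 / a) ^ p := by
          gcongr
          linarith [Real.add_one_le_exp (1 / a)]
      _ = Real.exp (p / a) := by rw [← Real.exp_mul]; ring_nf
  have hdecay : 1 - p / a ≤ Real.exp (-(p / a)) := by
    linarith [Real.add_one_le_exp (-(p / a))]
  calc (1 - p / a) * (a + 1) ^ p ≤ Real.exp (-(p / a)) * (a ^ p * Real.exp (p / a)) := by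
        rw [hsplit]
        exact mul_le_mul hdecay (by gcongr) (by positivity) (Real.exp_pos _).le
    _ = a ^ p := by rw [mul_left_comm, ← Real.exp_add, neg_add_cancel, Real.exp_zero, mul_one]

theorem le_of_affine_recurrence {u v c d : ℕ → ℝ} {t₀ : ℕ} (hc : ∀ t ≥ t₀, 0 ≤ c t)
    (hu : ∀ t ≥ t₀, u (t + 1) ≤ c t * u t + d t) (hv : ∀ t ≥ t₀, v (t + 1) = c t * v t + d t)
    (h₀ : u t₀ ≤ v t₀) : ∀ t ≥ t₀, u t ≤ v t := by
  intro t ht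
  induction t, ht using Nat.le_induction with
  | base => exact h₀
  | succ t ht ih =>
    calc u (t + 1) ≤ c t * u t + d t := hu t ht
      _ ≤ c t * v t + d t := by gcongr; exact hc t ht
      _ = v (t + 1) := (hv t ht).symm

section HarmonicDecay

variable {x : ℕ → ℝ} {t₀ : ℕ} {p : ℝ}

theorem abs_mul_rpow_le_of_recurrence (hp : 0 ≤ p) (hsmall : ∀ t ≥ t₀, p / ((t : ℝ) + 1) ≤ 1)
    (hx : ∀ t ≥ t₀, x (t + 1) = (1 - p / ((t : ℝ) + 1)) * x t) :
    ∀ t ≥ t₀, |x t| * ((t : ℝ) + 1) ^ p ≤ |x t₀| * ((t₀ : ℝ) + 1) ^ p := by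
  have hanti : AntitoneOn (fun t : ℕ => |x t| * ((t : ℝ) + 1) ^ p) (Set.Ici t₀) := by
    refine antitoneOn_nat_Ici_of_succ_le fun t ht => ?_
    have hcoeff : 0 ≤ 1 - p / ((t : ℝ) + 1) := sub_nonneg.2 (hsmall t ht)
    calc |x (t + 1)| * (((t + 1 : ℕ) : ℝ) + 1) ^ p
        = |x t| * ((1 - p / ((t : ℝ) + 1)) * (((t : ℝ) + 1) + 1) ^ p) := by
          rw [hx t ht, abs_mul, abs_of_nonneg hcoeff]
          push_cast
          ring
      _ ≤ |x t| * ((t : ℝ) + 1) ^ p := by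
          gcongr
          exact one_sub_div_mul_add_one_rpow_le (by positivity) hp
  exact fun t ht => hanti (Set.mem_Ici.2 le_rfl) (Set.mem_Ici.2 ht) ht

theorem exists_abs_le_mul_rpow_neg_of_recurrence (hp : 0 ≤ p)
    (hsmall : ∀ t ≥ t₀, p / ((t : ℝ) + 1) ≤ 1)
    (hx : ∀ t ≥ t₀, x (t + 1) = (1 - p / ((t : ℝ) + 1)) * x t) :
    ∃ C : ℝ, 0 < C ∧ ∀ t ≥ t₀, 1 ≤ t → |x t| ≤ C * (t : ℝ) ^ (-p) := by
  set M := |x t₀| * ((t₀ : ℝ) + 1) ^ p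
  have hM : 0 ≤ M := by positivity
  refine ⟨M + 1, by linarith, fun t ht ht1 => ?_⟩
  have htpos : (0 : ℝ) < t := by exact_mod_cast ht1
  calc |x t| = |x t| * ((t : ℝ) + 1) ^ p * ((t : ℝ) + 1) ^ (-p) := by
        rw [mul_assoc, ← Real.rpow_add (by positivity), add_neg_cancel, Real.rpow_zero, mul_one]
    _ ≤ M * (t : ℝ) ^ (-p) :=
        mul_le_mul (abs_mul_rpow_le_of_recurrence hp hsmall hx t ht)
          (Real.rpow_le_rpow_of_nonpos htpos (by linarith) (by linarith)) (by positivity) hM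
    _ ≤ (M + 1) * (t : ℝ) ^ (-p) := by gcongr; linarith

end HarmonicDecay

theorem comparison_sequences_general (u v r : ℕ → ℝ) (t₀ : ℕ) (p q : ℝ)
    (hp : 0 < p)
    (hsmall : ∀ t : ℕ, t₀ ≤ t → p / ((t : ℝ) + 1) ≤ 1)
    (hu : ∀ t : ℕ, t₀ ≤ t →
      u (t + 1) ≤ (1 - p / ((t : ℝ) + 1)) * u t + q / ((t : ℝ) + 1))
    (hv : ∀ t : ℕ, t₀ ≤ t →
      v (t + 1) = (1 - p / ((t : ℝ) + 1)) * v t + q / ((t : ℝ) + 1))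
    (hr : ∀ t : ℕ, t₀ ≤ t → r t = v t - q / p)
    (hinit : u t₀ ≤ v t₀) :
    (∀ t : ℕ, t₀ ≤ t → u t ≤ v t ∧ v t = r t + q / p) ∧
      ∃ C : ℝ, 0 < C ∧ ∀ t : ℕ, t₀ ≤ t → 1 ≤ t → |r t| ≤ C * (t : ℝ) ^ (-p) := by
  have huv := le_of_affine_recurrence (fun t ht => sub_nonneg.2 (hsmall t ht)) hu hv hinit
  have hr_rec : ∀ t ≥ t₀, r (t + 1) = (1 - p / ((t : ℝ) + 1)) * r t := by
    intro t ht
    rw [hr (t + 1) (Nat.le_succ_of_le ht), hv t ht, hr t ht]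
    field_simp
    ring
  exact ⟨fun t ht => ⟨huv t ht, by rw [hr t ht]; ring⟩,
    exists_abs_le_mul_rpow_neg_of_recurrence hp.le hsmall hr_rec⟩

/-- Comparison lemma: if `u_{t+1} ≤ (1 − p/(t+1)) u_t + q/(t+1)`,
`v_{t+1} = (1 − p/(t+1)) v_t + q/(t+1)` and `r_t = v_t − q/p` for `t ≥ t₀`,
with `u_{t₀} ≤ v_{t₀}`, then `u_t ≤ v_t = r_t + q/p` for all `t ≥ t₀` and
`r_t = O(1/t^p)`. -/
theorem comparison_sequences (u v r : ℕ → ℝ) (t₀ : ℕ) (p q : ℝ)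
    (ht₀ : 1 ≤ t₀) (hp : 0 < p) (hq : 0 < q)
    (hsmall : ∀ t : ℕ, t₀ ≤ t → p / ((t : ℝ) + 1) ≤ 1)
    (hu : ∀ t : ℕ, t₀ ≤ t →
      u (t + 1) ≤ (1 - p / ((t : ℝ) + 1)) * u t + q / ((t : ℝ) + 1))
    (hv : ∀ t : ℕ, t₀ ≤ t →
      v (t + 1) = (1 - p / ((t : ℝ) + 1)) * v t + q / ((t : ℝ) + 1))
    (hr : ∀ t : ℕ, t₀ ≤ t → r t = v t - q / p)
    (hinit : u t₀ ≤ v t₀) :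
    (∀ t : ℕ, t₀ ≤ t → u t ≤ v t ∧ v t = r t + q / p) ∧
      ∃ C : ℝ, 0 < C ∧ ∀ t : ℕ, t₀ ≤ t → 1 ≤ t → |r t| ≤ C * (t : ℝ) ^ (-p) :=
  comparison_sequences_general u v r t₀ p q hp hsmall hu hv hr hinit
end

section
/- Let F : ℝ^n → ℝ be twice continuously differentiable and suppose there are constants 0 < μ ≤ L < ∞ such that for every x ∈ ℝ^n and every v ∈ ℝ^n, μ‖v‖² ≤ ⟨v, ∇²F(x) v⟩ ≤ L‖v‖². Then for every step size α with 0 ≤ α ≤ 1/L and every x, y ∈ ℝ^n, ‖(x − α∇F(x)) − (y − α∇F(y))‖ ≤ (1 − αμ)‖x − y‖. -/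
/-!
The derivative of the gradient step `x ↦ x - α∇F(x)` is `I - α∇²F(x)`, a symmetric operator
whose quadratic form lies between `(1 - αL)‖v‖²` and `(1 - αμ)‖v‖²`. Since `αL ≤ 1` and
`μ ≤ L`, both bounds lie in `[-(1 - αμ), 1 - αμ]`, so, the operator being symmetric, its norm
is at most `1 - αμ`; the mean value inequality turns this into the contraction estimate.
-/

open InnerProductSpace RCLike

theorem LinearMap.IsSymmetric.opNorm_le_of_abs_re_inner_le
    {𝕜 E : Type*} [RCLike 𝕜] [NormedAddCommGroup E] [InnerProductSpace 𝕜 E]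
    {T : E →L[𝕜] E} (hT : T.IsSymmetric) {c : ℝ} (hc : 0 ≤ c)
    (h : ∀ x, |re (inner 𝕜 (T x) x)| ≤ c * ‖x‖ ^ 2) : ‖T‖ ≤ c := by
  rw [T.norm_eq_iSup_rayleighQuotient hT]
  refine ciSup_le fun x => ?_
  rcases eq_or_ne x 0 with rfl | hx
  · simpa using hc
  · rw [ContinuousLinearMap.rayleighQuotient, ContinuousLinearMap.reApplyInnerSelf_apply,
      abs_div, abs_sq, div_le_iff₀ (by positivity)]
    exact h x

section
variable {E : Type*} [NormedAddCommGroup E] [InnerProductSpace ℝ E]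

theorem LinearMap.IsSymmetric.norm_id_sub_smul_le {H : E →L[ℝ] E}
    (hH : H.IsSymmetric) {μ L α : ℝ} (hμL : μ ≤ L)
    (hbounds : ∀ v, μ * ‖v‖ ^ 2 ≤ inner ℝ v (H v) ∧
      inner ℝ v (H v) ≤ L * ‖v‖ ^ 2)
    (hα : 0 ≤ α) (hαL : α * L ≤ 1) :
    ‖ContinuousLinearMap.id ℝ E - α • H‖ ≤ 1 - α * μ := by
  have hαμ : α * μ ≤ α * L := mul_le_mul_of_nonneg_left hμL hα
  have hsymm : (ContinuousLinearMap.id ℝ E - α • H).IsSymmetric := by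
    simpa using LinearMap.IsSymmetric.id.sub (hH.smul (conj_trivial α))
  refine hsymm.opNorm_le_of_abs_re_inner_le (by linarith) fun v => ?_
  obtain ⟨hlo, hhi⟩ := hbounds v
  have hquad : inner ℝ ((ContinuousLinearMap.id ℝ E - α • H) v) v
      = ‖v‖ ^ 2 - α * inner ℝ v (H v) := by
    simp [inner_sub_left, inner_smul_left, real_inner_comm]
  rw [re_to_real, hquad, abs_le]
  constructor <;> nlinarith [sq_nonneg ‖v‖]

theorem inner_fderiv_gradient_apply [CompleteSpace E] (F : E → ℝ) (z u v : E) :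
    inner ℝ u (fderiv ℝ (gradient F) z v) = fderiv ℝ (fderiv ℝ F) z v u := by
  have : gradient F = (toDual ℝ E).symm ∘ fderiv ℝ F := rfl
  rw [this, LinearIsometryEquiv.comp_fderiv, ContinuousLinearMap.comp_apply, real_inner_comm]
  exact toDual_symm_apply

theorem ContDiffAt.isSymmetric_fderiv_gradient [CompleteSpace E]
    {F : E → ℝ} {z : E} (hF : ContDiffAt ℝ 2 F z) :
    (fderiv ℝ (gradient F) z).IsSymmetric := fun u v => by
  simp only [ContinuousLinearMap.coe_coe]
  rw [real_inner_comm, inner_fderiv_gradient_apply, inner_fderiv_gradient_apply,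
    hF.isSymmSndFDerivAt (by simp) u v]

theorem ContDiff.gradient [CompleteSpace E] {F : E → ℝ} {n : WithTop ℕ∞}
    (hF : ContDiff ℝ (n + 1) F) :
    ContDiff ℝ n (gradient F) :=
  (toDual ℝ E).symm.contDiff.comp (hF.fderiv_right le_rfl)

theorem norm_sub_smul_gradient_sub_le [CompleteSpace E]
    {F : E → ℝ} {μ L α : ℝ} (hμL : μ ≤ L) (hF : ContDiff ℝ 2 F)
    (hHess : ∀ x v : E,
      μ * ‖v‖ ^ 2 ≤ inner ℝ v (fderiv ℝ (gradient F) x v) ∧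
      inner ℝ v (fderiv ℝ (gradient F) x v) ≤ L * ‖v‖ ^ 2)
    (hα : 0 ≤ α) (hαL : α * L ≤ 1) (x y : E) :
    ‖(x - α • gradient F x) - (y - α • gradient F y)‖ ≤
      (1 - α * μ) * ‖x - y‖ := by
  have hgrad : ContDiff ℝ 1 (gradient F) := hF.gradient
  have hstep : ∀ z, HasFDerivAt (fun z => z - α • gradient F z)
      (ContinuousLinearMap.id ℝ E - α • fderiv ℝ (gradient F) z) z := fun z =>
    (hasFDerivAt_id z).sub ((hgrad.differentiable one_ne_zero z).hasFDerivAt.const_smul α)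
  have hbound : ∀ z,
      ‖ContinuousLinearMap.id ℝ E - α • fderiv ℝ (gradient F) z‖ ≤ 1 - α * μ :=
    fun z => hF.contDiffAt.isSymmetric_fderiv_gradient.norm_id_sub_smul_le hμL (hHess z) hα hαL
  exact convex_univ.norm_image_sub_le_of_norm_hasFDerivWithin_le
    (fun z _ => (hstep z).hasFDerivWithinAt) (fun z _ => hbound z) trivial trivial

end

/-- If `F : ℝⁿ → ℝ` is twice continuously differentiable with
`μ‖v‖² ≤ ⟨v, ∇²F(x)v⟩ ≤ L‖v‖²` for all `x, v`, then the gradient step map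
`x ↦ x − α∇F(x)` is a `(1 − αμ)`-contraction for any `0 ≤ α ≤ 1/L`. -/
theorem gradient_step_contraction (n : ℕ)
    (F : EuclideanSpace ℝ (Fin n) → ℝ) (μ L : ℝ)
    (hμ : 0 < μ) (hμL : μ ≤ L)
    (hF : ContDiff ℝ 2 F)
    (hHess : ∀ x v : EuclideanSpace ℝ (Fin n),
      μ * ‖v‖ ^ 2 ≤ (inner ℝ v (fderiv ℝ (gradient F) x v) : ℝ) ∧
      (inner ℝ v (fderiv ℝ (gradient F) x v) : ℝ) ≤ L * ‖v‖ ^ 2) :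
    ∀ α : ℝ, 0 ≤ α → α ≤ 1 / L →
      ∀ x y : EuclideanSpace ℝ (Fin n),
        ‖(x - α • gradient F x) - (y - α • gradient F y)‖ ≤
          (1 - α * μ) * ‖x - y‖ := by
  intro α hα hαL x y
  rw [le_div_iff₀ (hμ.trans_le hμL)] at hαL
  exact norm_sub_smul_gradient_sub_le hμL hF hHess hα hαL x y
end

section
/- Let (w_t) and (s_t) be real sequences and (p_t) a sequence with p_t ∈ (0, 1] for all t and ∑_{t=0}^∞ p_t = ∞. Suppose w_{t+1} ≤ (1 − p_t) w_t + p_t s_t for all t, and limsup_{t→∞} s_t ≤ ρ for some real ρ. Then limsup_{t→∞} w_t ≤ ρ. -/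
/-!
Fix reals `ρ < c < c'`. Once `s t ≤ c`, the recursion says that the excess `w t - c` is multiplied
by at most `1 - p t ≤ exp (-p t)` at each step, so after time `N` it is bounded by
`exp (-∑_{N ≤ i < t} p i) * (w N - c)`, which tends to `0` because `∑ p t` diverges.
Hence eventually `w t ≤ c'`, and letting `c'` decrease to `ρ` bounds the limsup.
-/

open Filter Finset Topology

theorem prod_one_sub_le_exp_neg_sum {ι : Type*} (s : Finset ι) {p : ι → ℝ}
    (hp : ∀ i ∈ s, p i ≤ 1) : ∏ i ∈ s, (1 - p i) ≤ Real.exp (-∑ i ∈ s, p i) := by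
  rw [← sum_neg_distrib, Real.exp_sum]
  exact prod_le_prod (fun i hi => sub_nonneg.2 (hp i hi)) fun i _ => Real.one_sub_le_exp_neg _

theorem tendsto_prod_Ico_one_sub_atTop_zero {p : ℕ → ℝ} (hp : ∀ i, p i ≤ 1)
    (hp_div : Tendsto (fun n => ∑ i ∈ range n, p i) atTop atTop) (N : ℕ) :
    Tendsto (fun t => ∏ i ∈ Ico N t, (1 - p i)) atTop (𝓝 0) := by
  have hsum : Tendsto (fun t => ∑ i ∈ Ico N t, p i) atTop atTop := by
    refine (tendsto_atTop_add_const_right _ (-∑ i ∈ range N, p i) hp_div).congr' ?_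
    filter_upwards [eventually_ge_atTop N] with t ht
    rw [sum_Ico_eq_sub _ ht, sub_eq_add_neg]
  exact squeeze_zero (fun t => prod_nonneg fun i _ => sub_nonneg.2 (hp i))
    (fun t => prod_one_sub_le_exp_neg_sum _ fun i _ => hp i)
    (Real.tendsto_exp_atBot.comp (tendsto_neg_atTop_atBot.comp hsum))

theorem le_prod_Ico_mul_of_le_mul {R : Type*} [CommSemiring R] [PartialOrder R] [IsOrderedRing R]
    {u a : ℕ → R} {N : ℕ} (ha : ∀ t, N ≤ t → 0 ≤ a t)
    (hu : ∀ t, N ≤ t → u (t + 1) ≤ a t * u t) (t : ℕ) (ht : N ≤ t) :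
    u t ≤ (∏ i ∈ Ico N t, a i) * u N := by
  induction t, ht using Nat.le_induction with
  | base => simp
  | succ t ht ih =>
    calc u (t + 1) ≤ a t * u t := hu t ht
      _ ≤ a t * ((∏ i ∈ Ico N t, a i) * u N) := mul_le_mul_of_nonneg_left ih (ha t ht)
      _ = (∏ i ∈ Ico N (t + 1), a i) * u N := by rw [prod_Ico_succ_top ht]; ring

theorem eventually_le_of_le_one_sub_mul_add_mul {w s p : ℕ → ℝ} {c c' : ℝ}
    (hp₀ : ∀ t, 0 ≤ p t) (hp₁ : ∀ t, p t ≤ 1)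
    (hp_div : Tendsto (fun n => ∑ t ∈ range n, p t) atTop atTop)
    (hrec : ∀ t, w (t + 1) ≤ (1 - p t) * w t + p t * s t)
    (hs : ∀ᶠ t in atTop, s t ≤ c) (hcc' : c < c') :
    ∀ᶠ t in atTop, w t ≤ c' := by
  obtain ⟨N, hN⟩ := eventually_atTop.1 hs
  have hcontract : ∀ t, N ≤ t → w (t + 1) - c ≤ (1 - p t) * (w t - c) := fun t ht => by
    nlinarith [hrec t, hN t ht, hp₀ t]
  have hexcess : ∀ t, N ≤ t → w t - c ≤ (∏ i ∈ Ico N t, (1 - p i)) * (w N - c) :=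
    le_prod_Ico_mul_of_le_mul (u := fun t => w t - c) (fun t _ => sub_nonneg.2 (hp₁ t)) hcontract
  have hsmall : ∀ᶠ t in atTop, (∏ i ∈ Ico N t, (1 - p i)) * (w N - c) < c' - c := by
    have := (tendsto_prod_Ico_one_sub_atTop_zero hp₁ hp_div N).mul_const (w N - c)
    rw [zero_mul] at this
    exact this.eventually (gt_mem_nhds (sub_pos.2 hcc'))
  filter_upwards [hsmall, eventually_ge_atTop N] with t hlt ht
  linarith [hexcess t ht]

/-- If `w_{t+1} ≤ (1 − p_t) w_t + p_t s_t` with `p_t ∈ (0,1]`,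
`∑ p_t = ∞`, and `limsup s_t ≤ ρ`, then `limsup w_t ≤ ρ`
(limsups taken in the extended reals). -/
theorem limsup_recursive_bound (w s : ℕ → ℝ) (p : ℕ → ℝ) (ρ : ℝ)
    (hp : ∀ t, 0 < p t ∧ p t ≤ 1)
    (hp_div : Tendsto (fun n => ∑ t ∈ Finset.range n, p t) atTop atTop)
    (hrec : ∀ t, w (t + 1) ≤ (1 - p t) * w t + p t * s t)
    (hs : limsup (fun t => (s t : EReal)) atTop ≤ (ρ : EReal)) :
    limsup (fun t => (w t : EReal)) atTop ≤ (ρ : EReal) := by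
  rw [limsup_le_iff'] at hs ⊢
  intro y hy
  obtain ⟨c, hρc, hcy⟩ := EReal.lt_iff_exists_real_btwn.1 hy
  obtain ⟨c', hcc', hc'y⟩ := EReal.lt_iff_exists_real_btwn.1 hcy
  have hs_le : ∀ᶠ t in atTop, s t ≤ c := (hs c hρc).mono fun t => EReal.coe_le_coe_iff.1
  filter_upwards [eventually_le_of_le_one_sub_mul_add_mul (fun t => (hp t).1.le)
    (fun t => (hp t).2) hp_div hrec hs_le (EReal.coe_lt_coe_iff.1 hcc')] with t ht
  exact (EReal.coe_le_coe_iff.2 ht).trans hc'y.le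
end
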